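/- arXiv:1307.0622 — 3 statements merged into one kernel-verified Lean document; each statement's English description precedes it below -/
import Mathlib

section
/- There exists a constant C > 0 such that |K_D(y,z)| ≤ C/|y − z| for all y, z in the open unit disk D with y ≠ z. -/
open ComplexConjugate

/-- The inverse point of `z` with respect to the unit circle: `z* = z / |z|²`. -/
noncomputable def starInv (z : ℂ) : ℂ := (‖z‖ ^ 2)⁻¹ • z

/-- Rotation by `π/2`: for `a = (a₁, a₂)`, `a^⊥ = (−a₂, a₁)`. -/
noncomputable def perp (a : ℂ) : ℂ := Complex.I * a

/-- The Biot–Savart kernel of the unit disk: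
`K_D(y,z) = (1/(2π)) ((y−z)/|y−z|² − (y−z*)/|y−z*|²)^⊥` for `z ≠ 0`,
with the convention `K_D(y,0) = (1/(2π)) y^⊥/|y|²`. -/
noncomputable def KD (y z : ℂ) : ℂ :=
  if z = 0 then (2 * Real.pi)⁻¹ • perp ((‖y‖ ^ 2)⁻¹ • y)
  else (2 * Real.pi)⁻¹ •
    perp ((‖y - z‖ ^ 2)⁻¹ • (y - z) - (‖y - starInv z‖ ^ 2)⁻¹ • (y - starInv z))

/-!
Both terms of `K_D(y,z)` have norm at most `1/|y − z|`: the first has norm exactly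
`1/|y − z|`, and the reflected point `z*` is at least as far from `y` as `z` is. The latter
follows from `|z| |y − z*| = |1 − z̄ y|` and the identity
`|1 − z̄ y|² = |y − z|² + (1 − |y|²)(1 − |z|²)`. Hence `C = 1/π` works.
-/

lemma norm_perp (a : ℂ) : ‖perp a‖ = ‖a‖ := by
  simp [perp]

lemma norm_inv_norm_sq_smul {E : Type*} [NormedAddCommGroup E] [NormedSpace ℝ E] (w : E) :
    ‖(‖w‖ ^ 2)⁻¹ • w‖ = ‖w‖⁻¹ := by
  rcases eq_or_ne w 0 with rfl | hw
  · simp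
  rw [norm_smul, norm_inv, norm_pow, norm_norm, pow_two, mul_inv,
    inv_mul_cancel_right₀ (norm_ne_zero_iff.2 hw)]

lemma norm_sub_sq_add_eq_norm_one_sub_conj_mul_sq (y z : ℂ) :
    ‖y - z‖ ^ 2 + (1 - ‖y‖ ^ 2) * (1 - ‖z‖ ^ 2) = ‖1 - conj z * y‖ ^ 2 := by
  simp only [Complex.sq_norm, Complex.normSq_apply, Complex.sub_re, Complex.sub_im,
    Complex.mul_re, Complex.mul_im, Complex.one_re, Complex.one_im, Complex.conj_re,
    Complex.conj_im]
  ring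

lemma norm_sub_le_norm_one_sub_conj_mul {y z : ℂ} (hy : ‖y‖ ≤ 1) (hz : ‖z‖ ≤ 1) :
    ‖y - z‖ ≤ ‖1 - conj z * y‖ := by
  have hy' : 0 ≤ 1 - ‖y‖ ^ 2 := by nlinarith [norm_nonneg y]
  have hz' : 0 ≤ 1 - ‖z‖ ^ 2 := by nlinarith [norm_nonneg z]
  refine pow_le_pow_iff_left₀ (norm_nonneg _) (norm_nonneg _) two_ne_zero |>.1 ?_
  rw [← norm_sub_sq_add_eq_norm_one_sub_conj_mul_sq]
  nlinarith [mul_nonneg hy' hz']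

lemma conj_mul_starInv {z : ℂ} (hz : z ≠ 0) : conj z * starInv z = 1 := by
  rw [starInv, Complex.real_smul, mul_left_comm, mul_comm (conj z), Complex.mul_conj',
    ← Complex.ofReal_pow, ← Complex.ofReal_mul, inv_mul_cancel₀ (by positivity),
    Complex.ofReal_one]

lemma norm_mul_norm_sub_starInv {z : ℂ} (hz : z ≠ 0) (y : ℂ) :
    ‖z‖ * ‖y - starInv z‖ = ‖1 - conj z * y‖ := by
  rw [← Complex.norm_conj z, ← norm_mul, mul_sub, conj_mul_starInv hz, norm_sub_rev]

lemma norm_sub_le_norm_sub_starInv {y z : ℂ} (hy : ‖y‖ ≤ 1) (hz : ‖z‖ ≤ 1) (hz0 : z ≠ 0) :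
    ‖y - z‖ ≤ ‖y - starInv z‖ :=
  calc ‖y - z‖ ≤ ‖1 - conj z * y‖ := norm_sub_le_norm_one_sub_conj_mul hy hz
    _ = ‖z‖ * ‖y - starInv z‖ := (norm_mul_norm_sub_starInv hz0 y).symm
    _ ≤ ‖y - starInv z‖ := mul_le_of_le_one_left (norm_nonneg _) hz

lemma norm_KD_zero (y : ℂ) : ‖KD y 0‖ = (2 * Real.pi)⁻¹ * ‖y‖⁻¹ := by
  rw [KD, if_pos rfl, norm_smul, norm_perp, norm_inv_norm_sq_smul,
    Real.norm_of_nonneg (by positivity)]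

lemma norm_KD_le_of_ne_zero {z : ℂ} (hz : z ≠ 0) (y : ℂ) :
    ‖KD y z‖ ≤ (2 * Real.pi)⁻¹ * (‖y - z‖⁻¹ + ‖y - starInv z‖⁻¹) := by
  rw [KD, if_neg hz, norm_smul, norm_perp, Real.norm_of_nonneg (by positivity),
    ← norm_inv_norm_sq_smul (y - z), ← norm_inv_norm_sq_smul (y - starInv z)]
  gcongr
  exact norm_sub_le _ _

lemma norm_KD_le {y z : ℂ} (hy : ‖y‖ ≤ 1) (hz : ‖z‖ ≤ 1) (hyz : y ≠ z) :
    ‖KD y z‖ ≤ Real.pi⁻¹ * ‖y - z‖⁻¹ := by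
  have hpi : (2 * Real.pi)⁻¹ ≤ Real.pi⁻¹ := by gcongr; linarith [Real.pi_pos]
  rcases eq_or_ne z 0 with rfl | hz0
  · rw [norm_KD_zero, sub_zero]
    gcongr
  have hfar : ‖y - starInv z‖⁻¹ ≤ ‖y - z‖⁻¹ :=
    inv_anti₀ (norm_pos_iff.2 (sub_ne_zero.2 hyz)) (norm_sub_le_norm_sub_starInv hy hz hz0)
  calc ‖KD y z‖ ≤ (2 * Real.pi)⁻¹ * (‖y - z‖⁻¹ + ‖y - starInv z‖⁻¹) :=
        norm_KD_le_of_ne_zero hz0 y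
    _ ≤ (2 * Real.pi)⁻¹ * (2 * ‖y - z‖⁻¹) := by gcongr; linarith
    _ = Real.pi⁻¹ * ‖y - z‖⁻¹ := by field_simp

/-- There is `C > 0` with `|K_D(y,z)| ≤ C/|y − z|` for all `y ≠ z` in the open unit disk. -/
theorem KD_norm_le :
    ∃ C : ℝ, 0 < C ∧ ∀ y ∈ Metric.ball (0 : ℂ) 1, ∀ z ∈ Metric.ball (0 : ℂ) 1,
      y ≠ z → ‖KD y z‖ ≤ C / ‖y - z‖ := by
  refine ⟨Real.pi⁻¹, by positivity, fun y hy z hz hyz => ?_⟩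
  rw [mem_ball_zero_iff] at hy hz
  rw [div_eq_mul_inv]
  exact norm_KD_le hy.le hz.le hyz
end

section
/- For every y ∈ ℝ² with |y| = 1 and every z in the open unit disk D, the inner product K_D(y,z) · y equals 0. -/
/-!
Inversion in the unit circle scales distances to a point `y` of the circle by `|y - z*| = |y - z| / |z|`,
so the two Coulomb fields in `K_D(y, z)` combine into a real multiple of `y`: on the boundary,
`K_D(y, z) = P(z, y) y^⊥` with the Poisson kernel `P(z, y) = (1 - |z|²) / (2π |y - z|²)`,
and `y^⊥ ⊥ y`.
-/

open Complex ComplexConjugate Real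

noncomputable def coulomb (x : ℂ) : ℂ := (‖x‖ ^ 2)⁻¹ • x

lemma KD_of_ne_zero (y : ℂ) {z : ℂ} (hz : z ≠ 0) :
    KD y z = (2 * π)⁻¹ • perp (coulomb (y - z) - coulomb (y - starInv z)) :=
  if_neg hz

lemma perp_smul (c : ℝ) (a : ℂ) : perp (c • a) = c • perp a :=
  mul_smul_comm c I a

lemma inner_perp_self (a : ℂ) : inner ℝ (perp a) a = 0 := by
  rw [real_inner_comm, perp, ← smul_eq_mul]
  exact real_inner_I_smul_self ℂ a

lemma starInv_eq_inv_conj (z : ℂ) : starInv z = (conj z)⁻¹ := by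
  rw [starInv, inv_def, normSq_conj, conj_conj, real_smul, mul_comm, normSq_eq_norm_sq,
    ofReal_inv, ofReal_pow]

lemma norm_sub_starInv_mul_norm {y : ℂ} (hy : ‖y‖ = 1) {z : ℂ} (hz : z ≠ 0) :
    ‖y - starInv z‖ * ‖z‖ = ‖y - z‖ := by
  have hy' : y * conj y = 1 := by rw [mul_conj', hy, ofReal_one, one_pow]
  have hz' : conj z ≠ 0 := (map_ne_zero conj).mpr hz
  calc ‖y - starInv z‖ * ‖z‖ = ‖(y - starInv z) * conj z‖ := by rw [norm_mul, norm_conj]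
    _ = ‖y * conj (z - y)‖ := by
      rw [starInv_eq_inv_conj, sub_mul, inv_mul_cancel₀ hz', map_sub, mul_sub, hy']
    _ = ‖y - z‖ := by rw [norm_mul, norm_conj, hy, one_mul, norm_sub_rev]

lemma coulomb_sub_sub_coulomb_sub_starInv {y : ℂ} (hy : ‖y‖ = 1) {z : ℂ} (hz : z ≠ 0) :
    coulomb (y - z) - coulomb (y - starInv z) = ((1 - ‖z‖ ^ 2) / ‖y - z‖ ^ 2) • y := by
  have hzn : ‖z‖ ≠ 0 := norm_ne_zero_iff.mpr hz
  have hdist : ‖y - starInv z‖ ^ 2 = ‖y - z‖ ^ 2 / ‖z‖ ^ 2 := by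
    rw [eq_div_iff (pow_ne_zero _ hzn), ← mul_pow, norm_sub_starInv_mul_norm hy hz]
  rw [coulomb, coulomb, hdist, inv_div, starInv]
  match_scalars <;> field_simp; ring

/-- At `z = y` both sides are `0`: then `z* = z`, and `0⁻¹ = 0`. -/
lemma KD_eq_poisson_smul_perp {y : ℂ} (hy : ‖y‖ = 1) (z : ℂ) :
    KD y z = ((1 - ‖z‖ ^ 2) / (2 * π * ‖y - z‖ ^ 2)) • perp y := by
  rcases eq_or_ne z 0 with rfl | hz
  · simp [KD, hy, perp]
  · rw [KD_of_ne_zero y hz, coulomb_sub_sub_coulomb_sub_starInv hy hz, perp_smul, smul_smul]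
    congr 1
    field_simp

theorem KD_inner_eq_zero_general (y : ℂ) (hy : ‖y‖ = 1) (z : ℂ) :
    (inner ℝ (KD y z) y : ℝ) = 0 := by
  rw [KD_eq_poisson_smul_perp hy, real_inner_smul_left, inner_perp_self, mul_zero]

/-- For `|y| = 1` and `z` in the open unit disk, `K_D(y,z) · y = 0`. -/
theorem KD_inner_eq_zero (y : ℂ) (hy : ‖y‖ = 1) (z : ℂ) (hz : z ∈ Metric.ball (0 : ℂ) 1) :
    (inner ℝ (KD y z) y : ℝ) = 0 :=
  KD_inner_eq_zero_general y hy z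
end

section
/- For every α ∈ [1/2, 1) there exists a constant C > 0 such that for all d > 0 and all points x, ỹ, y ∈ ℝ² with |y − ỹ| ≤ d/2 and |x − ỹ| ≥ 5d, one has |x − y|^{2α} ∫_{B(ỹ,2d)} |y − z|^{−1} |z − x|^{−2α} dz ≤ C d, where B(ỹ,2d) is the open ball of center ỹ and radius 2d and the integral is with respect to two-dimensional Lebesgue measure. -/
open MeasureTheory Metric Set Real

/-!
On `B(ỹ, 2d)` the point `z` stays at distance `≥ 3d` from `x`, while `|x − y| ≤ |x − ỹ| + d/2`,
so `|x − y| ≤ 2|z − x|` and the factor `|x − y|^{2α} |z − x|^{−2α}` is at most `2^{2α} ≤ 4`.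
What remains is `4 ∫_{B(ỹ,2d)} |y − z|⁻¹ dz ≤ 4 ∫_{B(y,5d/2)} |y − z|⁻¹ dz = 20πd`, the last
integral being computed by integrating in the radius.
-/

theorem norm_sub_le_two_mul_norm_sub_of_mem_ball {E : Type*} [SeminormedAddCommGroup E]
    {d : ℝ} {x yt y z : E} (hy : ‖y - yt‖ ≤ d / 2) (hx : 5 * d ≤ ‖x - yt‖)
    (hz : z ∈ ball yt (2 * d)) : 0 < ‖z - x‖ ∧ ‖x - y‖ ≤ 2 * ‖z - x‖ := by
  rw [mem_ball, dist_eq_norm] at hz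
  have hxz := norm_sub_le_norm_sub_add_norm_sub x z yt
  have hxy := norm_sub_le_norm_sub_add_norm_sub x yt y
  rw [norm_sub_rev x z] at hxz
  rw [norm_sub_rev yt y] at hxy
  have := norm_nonneg (z - yt)
  constructor <;> linarith

theorem rpow_mul_rpow_neg_le {a b k p q : ℝ} (ha : 0 ≤ a) (hb : 0 < b) (hab : a ≤ k * b)
    (hk : 1 ≤ k) (hp : 0 ≤ p) (hpq : p ≤ q) : a ^ p * b ^ (-p) ≤ k ^ q :=
  calc a ^ p * b ^ (-p) = (a / b) ^ p := by
        rw [rpow_neg hb.le, div_rpow ha hb.le, div_eq_mul_inv]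
    _ ≤ k ^ p := rpow_le_rpow (div_nonneg ha hb.le) ((div_le_iff₀ hb).2 hab) hp
    _ ≤ k ^ q := rpow_le_rpow_of_exponent_le hk hpq

theorem rpow_norm_sub_mul_inv_norm_sub_mul_rpow_neg_le {E : Type*} [SeminormedAddCommGroup E]
    {d p : ℝ} {x yt y z : E} (hp₀ : 0 ≤ p) (hp₂ : p ≤ 2) (hy : ‖y - yt‖ ≤ d / 2)
    (hx : 5 * d ≤ ‖x - yt‖) (hz : z ∈ ball yt (2 * d)) :
    ‖x - y‖ ^ p * (‖y - z‖⁻¹ * ‖z - x‖ ^ (-p)) ≤ 4 * ‖y - z‖⁻¹ := by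
  obtain ⟨hzx, hxy⟩ := norm_sub_le_two_mul_norm_sub_of_mem_ball hy hx hz
  have hfactor := rpow_mul_rpow_neg_le (norm_nonneg _) hzx hxy one_le_two hp₀ hp₂
  rw [rpow_two] at hfactor
  calc _ = ‖x - y‖ ^ p * ‖z - x‖ ^ (-p) * ‖y - z‖⁻¹ := by ring
    _ ≤ 4 * ‖y - z‖⁻¹ := mul_le_mul_of_nonneg_right (by linarith) (by positivity)

theorem setIntegral_ball_norm_sub {E : Type*} [NormedAddCommGroup E] [NormedSpace ℝ E]
    [MeasurableSpace E] [BorelSpace E] [FiniteDimensional ℝ E] (μ : Measure E)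
    [μ.IsAddHaarMeasure] (f : ℝ → ℝ) (c : E) (R : ℝ) :
    ∫ z in ball c R, f ‖c - z‖ ∂μ = ∫ z in ball 0 R, f ‖z‖ ∂μ := by
  have hpre : (· + c) ⁻¹' ball c R = ball 0 R := by
    ext z
    simp [dist_eq_norm]
  rw [← hpre, ← (measurePreserving_add_right μ c).setIntegral_preimage_emb
    (measurableEmbedding_addRight c) (fun z => f ‖c - z‖)]
  simp

theorem integral_inv_norm_ball_zero {R : ℝ} (hR : 0 ≤ R) :
    ∫ z in ball (0 : ℂ) R, ‖z‖⁻¹ = 2 * π * R := by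
  have hradial : ∫ r in Ioi (0 : ℝ), r ^ (2 - 1) • (Iio R).indicator (·⁻¹) r = R := by
    rw [setIntegral_congr_fun measurableSet_Ioi (g := (Iio R).indicator 1)]
    · simp [integral_indicator_one measurableSet_Iio, Measure.real, Iio_inter_Ioi, hR]
    · intro r hr
      by_cases h : r < R <;> simp [h, indicator, (mem_Ioi.1 hr).ne']
  have hind : (ball (0 : ℂ) R).indicator (fun z => ‖z‖⁻¹) =
      fun z => (Iio R).indicator (·⁻¹) ‖z‖ := by
    ext z
    simp [indicator]
  rw [← integral_indicator measurableSet_ball, hind, integral_fun_norm_addHaar,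
    Complex.finrank_real_complex, hradial, measureReal_def, Complex.volume_ball]
  simp only [ENNReal.ofReal_one, one_pow, one_mul, ENNReal.coe_toReal, NNReal.coe_real_pi,
    smul_eq_mul, nsmul_eq_mul, Nat.cast_ofNat]
  ring

theorem integral_inv_norm_sub_ball (c : ℂ) {R : ℝ} (hR : 0 ≤ R) :
    ∫ z in ball c R, ‖c - z‖⁻¹ = 2 * π * R :=
  (setIntegral_ball_norm_sub volume (·⁻¹) c R).trans (integral_inv_norm_ball_zero hR)

/-- For every `α ∈ [1/2, 1)` there is `C > 0` such that for all `d > 0` and points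
`x, ỹ, y` with `|y − ỹ| ≤ d/2` and `|x − ỹ| ≥ 5d`,
`|x − y|^{2α} ∫_{B(ỹ,2d)} |y − z|⁻¹ |z − x|^{−2α} dz ≤ C d`. -/
theorem far_corner_small_ball_bound (α : ℝ) (hα : α ∈ Set.Ico (1 / 2 : ℝ) 1) :
    ∃ C : ℝ, 0 < C ∧ ∀ d : ℝ, 0 < d → ∀ x yt y : ℂ,
      ‖y - yt‖ ≤ d / 2 → 5 * d ≤ ‖x - yt‖ →
      ‖x - y‖ ^ (2 * α) * ∫ z in Metric.ball yt (2 * d), ‖y - z‖⁻¹ * ‖z - x‖ ^ (-(2 * α)) ≤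
        C * d := by
  obtain ⟨hα₀, hα₁⟩ := hα
  refine ⟨20 * π, by positivity, fun d hd x yt y hy hx => ?_⟩
  have hval := integral_inv_norm_sub_ball y (R := 5 / 2 * d) (by positivity)
  -- the Bochner integral of a non-integrable function is `0`
  have hint : IntegrableOn (fun z => ‖y - z‖⁻¹) (ball y (5 / 2 * d)) :=
    Integrable.of_integral_ne_zero (by rw [hval]; positivity)
  have hsub : ball yt (2 * d) ⊆ ball y (5 / 2 * d) :=
    ball_subset_ball' (by rw [dist_comm, dist_eq_norm]; linarith)
  calc _ = ∫ z in ball yt (2 * d), ‖x - y‖ ^ (2 * α) * (‖y - z‖⁻¹ * ‖z - x‖ ^ (-(2 * α))) :=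
        (integral_const_mul _ _).symm
    _ ≤ ∫ z in ball yt (2 * d), 4 * ‖y - z‖⁻¹ :=
        integral_mono_of_nonneg (ae_of_all _ fun z => by positivity)
          ((hint.mono_set hsub).const_mul 4) ((ae_restrict_iff' measurableSet_ball).2
            (ae_of_all _ fun z => rpow_norm_sub_mul_inv_norm_sub_mul_rpow_neg_le
              (by linarith) (by linarith) hy hx))
    _ = 4 * ∫ z in ball yt (2 * d), ‖y - z‖⁻¹ := integral_const_mul 4 _
    _ ≤ 4 * ∫ z in ball y (5 / 2 * d), ‖y - z‖⁻¹ := mul_le_mul_of_nonneg_left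
        (setIntegral_mono_set hint (ae_of_all _ fun z => by positivity) hsub.eventuallyLE)
        zero_le_four
    _ = 20 * π * d := by rw [hval]; ring
end
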